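/- arXiv:1809.03852 — 2 statements merged into one kernel-verified Lean document; each statement's English description precedes it below -/
import Mathlib

section
/- Let y : [t₀, T) → [0, ∞) be a C¹ function satisfying the differential inequality y' ≤ -a y + b y³ + c on (t₀, T), with constants a, b, c > 0. Suppose the polynomial p(s) = -a s + b s³ + c has a root s₁ > 0 with p < 0 on an interval (s₀, s₁) containing y(t₀). If y(t₀) < s₁ and p(y(t₀)) < 0, then y(t) < s₁ for all t ∈ [t₀, T). -/
/-- If a nonnegative `C¹` function satisfies `y' ≤ -a y + b y³ + c` with
`a, b, c > 0`, and the cubic `p(s) = -a s + b s³ + c` has a positive root `s₁`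
with `p < 0` on `(s₀, s₁) ∋ y(t₀)`, then `y(t) < s₁` for all `t ∈ [t₀, T)`. -/
theorem stmt8 (t₀ T : ℝ) (hT : t₀ < T)
    (y y' : ℝ → ℝ) (a b c : ℝ) (ha : 0 < a) (hb : 0 < b) (hc : 0 < c)
    (hy0 : ∀ t ∈ Set.Ico t₀ T, 0 ≤ y t)
    (hycont : ContinuousOn y (Set.Ico t₀ T))
    (hyderiv : ∀ t ∈ Set.Ioo t₀ T, HasDerivAt y (y' t) t)
    (hineq : ∀ t ∈ Set.Ioo t₀ T, y' t ≤ -a * y t + b * (y t) ^ 3 + c)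
    (s₀ s₁ : ℝ) (hs₁ : 0 < s₁) (hroot : -a * s₁ + b * s₁ ^ 3 + c = 0)
    (hneg : ∀ s ∈ Set.Ioo s₀ s₁, -a * s + b * s ^ 3 + c < 0)
    (hy₀mem : y t₀ ∈ Set.Ioo s₀ s₁)
    (hinit : y t₀ < s₁ ∧ -a * y t₀ + b * (y t₀) ^ 3 + c < 0) :
    ∀ t ∈ Set.Ico t₀ T, y t < s₁ := by
  by_contra hcon
  push_neg at hcon
  obtain ⟨w, ⟨hw0, hwT⟩, hws⟩ := hcon
  -- first crossing time
  set K : Set ℝ := Set.Icc t₀ w ∩ y ⁻¹' Set.Ici s₁ with hK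
  have hKsub : Set.Icc t₀ w ⊆ Set.Ico t₀ T := fun t ht => ⟨ht.1, lt_of_le_of_lt ht.2 hwT⟩
  have hKne : K.Nonempty := ⟨w, ⟨⟨hw0, le_refl w⟩, hws⟩⟩
  have hKbdd : BddBelow K := ⟨t₀, fun t ht => ht.1.1⟩
  have hKclosed : IsClosed K := by
    have hcont' : ContinuousOn y (Set.Icc t₀ w) := hycont.mono hKsub
    exact hcont'.preimage_isClosed_of_isClosed isClosed_Icc isClosed_Ici
  set ts := sInf K with hts
  have htsK : ts ∈ K := hKclosed.csInf_mem hKne hKbdd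
  obtain ⟨⟨hts0, htsw⟩, htsy⟩ := htsK
  have htsT : ts < T := lt_of_le_of_lt htsw hwT
  have hts0' : t₀ < ts := by
    rcases lt_or_eq_of_le hts0 with h | h
    · exact h
    · exfalso; rw [← h] at htsy; exact absurd htsy (not_le.mpr hinit.1)
  -- before ts, y < s₁
  have hbefore : ∀ t ∈ Set.Ico t₀ ts, y t < s₁ := by
    intro t ⟨ht0, hts'⟩
    by_contra h
    push_neg at h
    have : t ∈ K := ⟨⟨ht0, le_trans hts'.le htsw⟩, h⟩
    exact absurd (csInf_le hKbdd this) (not_le.mpr hts')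
  -- continuity at ts: y > s₀ near ts within Ico t₀ T
  have hct : ContinuousWithinAt y (Set.Ico t₀ T) ts := hycont ts ⟨hts0, htsT⟩
  have hs₀lt : s₀ < y ts := lt_of_lt_of_le (lt_trans hy₀mem.1 hy₀mem.2) htsy
  have hev : ∀ᶠ t in nhdsWithin ts (Set.Ico t₀ T), s₀ < y t :=
    hct (lt_mem_nhds hs₀lt)
  rw [eventually_nhdsWithin_iff, Metric.eventually_nhds_iff] at hev
  obtain ⟨ε, hε, hball⟩ := hev
  set t' := max ((t₀ + ts) / 2) (ts - ε / 2) with ht'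
  have ht'lt : t' < ts := max_lt (by linarith) (by linarith)
  have ht'gt : t₀ < t' := lt_of_lt_of_le (by linarith) (le_max_left _ _)
  have hsub2 : Set.Icc t' ts ⊆ Set.Ico t₀ T := fun t ht =>
    ⟨le_trans ht'gt.le ht.1, lt_of_le_of_lt ht.2 htsT⟩
  -- y strictly decreasing on [t', ts]
  have hanti : StrictAntiOn y (Set.Icc t' ts) := by
    apply strictAntiOn_of_deriv_neg (convex_Icc t' ts) (hycont.mono hsub2)
    intro x hx
    rw [interior_Icc] at hx
    have hxIoo : x ∈ Set.Ioo t₀ T := ⟨lt_trans ht'gt hx.1, lt_trans hx.2 htsT⟩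
    have hd := hyderiv x hxIoo
    rw [hd.deriv]
    have hx1 : y x < s₁ := hbefore x ⟨hxIoo.1.le, hx.2⟩
    have hx0 : s₀ < y x := by
      apply hball
      · rw [Real.dist_eq, abs_lt]
        constructor
        · have : ts - ε / 2 ≤ t' := le_max_right _ _
          linarith [hx.1]
        · linarith [hx.2]
      · exact ⟨hxIoo.1.le, hxIoo.2⟩
    exact lt_of_le_of_lt (hineq x hxIoo) (hneg (y x) ⟨hx0, hx1⟩)
  have h1 : y ts < y t' := hanti ⟨le_refl t', ht'lt.le⟩ ⟨ht'lt.le, le_refl ts⟩ ht'lt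
  have h2 : y t' < s₁ := hbefore t' ⟨ht'gt.le, ht'lt⟩
  have h3 : s₁ ≤ y ts := htsy
  linarith
end

section
/- Consider the constrained optimization: minimize f(a) = (I a | a)/2 over a ∈ ℝ³ subject to |I a| = m₀ for a fixed m₀ > 0, where I = diag(λ₁, λ₂, λ₃) with 0 < λ₁ ≤ λ₂ ≤ λ₃. Then the critical points of f on the constraint set are exactly the eigenvectors of I with |I a| = m₀, and local minima occur only at eigenvectors associated with λ* = λ₃ = max{λ₁, λ₂, λ₃} (when λ₃ is a strict maximum, only at a ∈ span(e₃)). -/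
/-!
In the coordinates `b = I a` the constraint is the sphere `∑ bᵢ² = m₀²` and the energy is
`∑ bᵢ² / (2 λᵢ)`. The components of `a × I a` are `±(λⱼ - λₖ) aⱼ aₖ`, so the cross product
vanishes iff all nonzero coordinates of `a` carry the same eigenvalue. If `aⱼ ≠ 0` and `λⱼ < λₖ`,
shrinking `bⱼ` and growing `bₖ` along the sphere strictly lowers the energy, since weight moves
to the smaller coefficient `1 / λₖ`; hence at a local minimum only coordinates with the largest
`λ` survive.
-/

open Filter Function Matrix Set Topology

theorem exists_forall_mul_eq_iff {ι R : Type*} [Nonempty ι] [CommRing R] [NoZeroDivisors R]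
    (l a : ι → R) :
    (∃ i, ∀ j, l j * a j = l i * a j) ↔ ∀ x y, (l x - l y) * (a x * a y) = 0 := by
  constructor
  · rintro ⟨i, hi⟩ x y
    linear_combination a y * hi x - a x * hi y
  · intro h
    by_cases ha : ∃ i, a i ≠ 0
    · obtain ⟨i, hi⟩ := ha
      refine ⟨i, fun j => ?_⟩
      rcases mul_eq_zero.1 (h j i) with hl | hprod
      · rw [sub_eq_zero.1 hl]
      · rw [(mul_eq_zero.1 hprod).resolve_right hi, mul_zero, mul_zero]
    · push Not at ha
      exact ⟨Classical.arbitrary ι, fun j => by rw [ha j, mul_zero, mul_zero]⟩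

theorem cross_mul_self_eq_zero_iff {R : Type*} [CommRing R] (l a : Fin 3 → R) :
    a ⨯₃ (fun i => l i * a i) = 0 ↔ ∀ x y, (l x - l y) * (a x * a y) = 0 := by
  simp only [cross_apply, cons_eq_zero_iff, zero_empty, and_true, Fin.forall_fin_succ,
    IsEmpty.forall_iff, Fin.succ_zero_eq_one, Fin.succ_one_eq_two]
  grind

theorem sum_apply_update {ι α M : Type*} [Fintype ι] [DecidableEq ι] [AddCommGroup M]
    (g : ι → α → M) (a : ι → α) (j : ι) (x : α) :
    ∑ i, g i (update a j x i) = ∑ i, g i (a i) + (g j x - g j (a j)) := by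
  simp only [apply_update g a, Finset.sum_update_of_mem (Finset.mem_univ j),
    Finset.sdiff_singleton_eq_erase]
  rw [← Finset.add_sum_erase _ _ (Finset.mem_univ j)]
  abel

section

variable {ι : Type*} [DecidableEq ι]

noncomputable def kineticEnergy [Fintype ι] (l a : ι → ℝ) : ℝ := (∑ i, l i * a i * a i) / 2

noncomputable def angularMomentumSq [Fintype ι] (l a : ι → ℝ) : ℝ := ∑ i, (l i * a i) ^ 2

/-- Scales coordinate `j` by `t` and adjusts coordinate `k` so that `∑ (lᵢ aᵢ)²` is unchanged;
`σ` is a sign with `σ |a k| = a k`. -/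
noncomputable def transferCurve (l a : ι → ℝ) (j k : ι) (σ t : ℝ) : ι → ℝ :=
  update (update a j (t * a j)) k (σ * √(a k ^ 2 + (1 - t ^ 2) * (l j * a j / l k) ^ 2))

variable {l a : ι → ℝ} {j k : ι} {σ t : ℝ}

theorem transferCurve_one (hσ : σ * |a k| = a k) : transferCurve l a j k σ 1 = a := by
  simp [transferCurve, Real.sqrt_sq_eq_abs, hσ]

theorem continuous_transferCurve : Continuous (transferCurve l a j k σ) := by
  unfold transferCurve
  fun_prop

theorem sq_mul_sqrt_of_sq_eq_one (hσ : σ ^ 2 = 1) {r : ℝ} (hr : 0 ≤ r) : (σ * √r) ^ 2 = r := by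
  rw [mul_pow, Real.sq_sqrt hr, hσ, one_mul]

variable [Fintype ι]

theorem angularMomentumSq_transferCurve (hjk : j ≠ k) (hk : l k ≠ 0) (hσ : σ ^ 2 = 1)
    (ht : t ^ 2 ≤ 1) :
    angularMomentumSq l (transferCurve l a j k σ t) = angularMomentumSq l a := by
  have hrad := sq_mul_sqrt_of_sq_eq_one hσ (r := a k ^ 2 + (1 - t ^ 2) * (l j * a j / l k) ^ 2)
    (add_nonneg (sq_nonneg _) (mul_nonneg (sub_nonneg.2 ht) (sq_nonneg _)))
  simp only [angularMomentumSq, transferCurve, sum_apply_update (fun i x => (l i * x) ^ 2),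
    update_of_ne hjk.symm, mul_pow (l k) (σ * _), hrad]
  field_simp
  ring

theorem kineticEnergy_transferCurve (hjk : j ≠ k) (hk : l k ≠ 0) (hσ : σ ^ 2 = 1)
    (ht : t ^ 2 ≤ 1) :
    kineticEnergy l (transferCurve l a j k σ t) =
      kineticEnergy l a + (1 - t ^ 2) * l j * a j ^ 2 * (l j - l k) / (2 * l k) := by
  have hrad := sq_mul_sqrt_of_sq_eq_one hσ (r := a k ^ 2 + (1 - t ^ 2) * (l j * a j / l k) ^ 2)
    (add_nonneg (sq_nonneg _) (mul_nonneg (sub_nonneg.2 ht) (sq_nonneg _)))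
  simp only [kineticEnergy, transferCurve, sum_apply_update (fun i x => l i * x * x),
    update_of_ne hjk.symm, mul_assoc (l k) (σ * _), ← sq, hrad]
  field_simp
  ring

end

theorem apply_eq_zero_of_isLocalMinOn_kineticEnergy {ι : Type*} [Fintype ι] {l a : ι → ℝ}
    {j k : ι}
    (hmin : IsLocalMinOn (kineticEnergy l) {x | angularMomentumSq l x = angularMomentumSq l a} a)
    (hj : 0 < l j) (hjk : l j < l k) : a j = 0 := by
  classical
  by_contra haj
  have hjk' : j ≠ k := fun h => hjk.ne (congrArg l h)
  have hk : 0 < l k := hj.trans hjk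
  obtain ⟨σ, hσ, hσa⟩ : ∃ σ : ℝ, σ ^ 2 = 1 ∧ σ * |a k| = a k := by
    rcases abs_choice (a k) with h | h
    · exact ⟨1, by norm_num, by rw [h, one_mul]⟩
    · exact ⟨-1, by norm_num, by rw [h, neg_one_mul, neg_neg]⟩
  have hnear : ∀ᶠ t in 𝓝[<] (1 : ℝ), t ^ 2 < 1 :=
    mem_of_superset (Ioo_mem_nhdsLT (by norm_num : (-1 : ℝ) < 1)) fun t ht =>
      (sq_lt_one_iff_abs_lt_one t).2 (abs_lt.2 ht)
  have hγ : Tendsto (transferCurve l a j k σ) (𝓝[<] 1)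
      (𝓝[{x | angularMomentumSq l x = angularMomentumSq l a}] a) := by
    refine tendsto_nhdsWithin_iff.2 ⟨?_, hnear.mono fun t ht =>
      angularMomentumSq_transferCurve hjk' hk.ne' hσ ht.le⟩
    have hcont := (continuous_transferCurve (l := l) (a := a) (j := j) (k := k) (σ := σ)).tendsto 1
    rw [transferCurve_one hσa] at hcont
    exact hcont.mono_left nhdsWithin_le_nhds
  have hdecr : ∀ᶠ t in 𝓝[<] (1 : ℝ),
      kineticEnergy l (transferCurve l a j k σ t) < kineticEnergy l a := by
    refine hnear.mono fun t ht => ?_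
    rw [kineticEnergy_transferCurve hjk' hk.ne' hσ ht.le, add_lt_iff_neg_left]
    have : 0 < (1 - t ^ 2) * l j * a j ^ 2 := by
      have := sub_pos.2 ht
      positivity
    exact div_neg_of_neg_of_pos (mul_neg_of_pos_of_neg this (by linarith)) (by positivity)
  obtain ⟨t, hle, hlt⟩ := ((hγ.eventually hmin).and hdecr).exists
  exact hle.not_gt hlt

theorem stmt17_general (l : Fin 3 → ℝ) (hl : 0 < l 0) (h01 : l 0 ≤ l 1) (h12 : l 1 ≤ l 2)
    (m₀ : ℝ)
    (f : (Fin 3 → ℝ) → ℝ) (hf : f = fun a => (∑ i, l i * a i * a i) / 2)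
    (S : Set (Fin 3 → ℝ))
    (hS : S = {a : Fin 3 → ℝ | Real.sqrt (∑ i, (l i * a i) ^ 2) = m₀}) :
    ∀ a ∈ S,
      ((a ⨯₃ (fun i => l i * a i) = 0 ↔ ∃ i : Fin 3, ∀ j, l j * a j = l i * a j)) ∧
      (IsLocalMinOn f S a →
        (∃ i : Fin 3, (∀ j, l j * a j = l i * a j) ∧ l i = l 2) ∧
        (l 1 < l 2 → ∀ j : Fin 3, j ≠ 2 → a j = 0)) := by
  subst hf hS
  have hmono : Monotone l := Fin.monotone_iff_le_succ.2 fun i => by fin_cases i; exacts [h01, h12]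
  intro a ha
  refine ⟨(cross_mul_self_eq_zero_iff l a).trans (exists_forall_mul_eq_iff l a).symm,
    fun hmin => ?_⟩
  have hlevel : {x | angularMomentumSq l x = angularMomentumSq l a} ⊆
      {a | √(∑ i, (l i * a i) ^ 2) = m₀} := fun x hx => (congrArg Real.sqrt hx).trans ha
  have hzero : ∀ j, l j < l 2 → a j = 0 := fun j =>
    apply_eq_zero_of_isLocalMinOn_kineticEnergy (hmin.on_subset hlevel)
      (hl.trans_le (hmono (Fin.zero_le j)))
  refine ⟨⟨2, fun j => ?_, rfl⟩, fun h12' j hj => hzero j ?_⟩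
  · rcases (hmono (show j ≤ 2 from Fin.le_last j)).lt_or_eq with h | h
    · rw [hzero j h, mul_zero, mul_zero]
    · rw [h]
  · exact (hmono (show j ≤ 1 by omega)).trans_lt h12'

/-- Critical points of the kinetic energy `f(a) = (I a | a)/2` on the
constraint set `{|I a| = m₀}` (characterized by the Lagrange condition
`a × I a = 0`) are exactly the eigenvectors of `I = diag(λ₁,λ₂,λ₃)` on the
constraint set, and local minima occur only at eigenvectors associated with the
largest moment of inertia `λ₃`; if `λ₃` is a strict maximum, only at
`a ∈ span(e₃)`. -/
theorem stmt17 (l : Fin 3 → ℝ) (hl : 0 < l 0) (h01 : l 0 ≤ l 1) (h12 : l 1 ≤ l 2)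
    (m₀ : ℝ) (hm₀ : 0 < m₀)
    (f : (Fin 3 → ℝ) → ℝ) (hf : f = fun a => (∑ i, l i * a i * a i) / 2)
    (S : Set (Fin 3 → ℝ))
    (hS : S = {a : Fin 3 → ℝ | Real.sqrt (∑ i, (l i * a i) ^ 2) = m₀}) :
    ∀ a ∈ S,
      ((a ⨯₃ (fun i => l i * a i) = 0 ↔ ∃ i : Fin 3, ∀ j, l j * a j = l i * a j)) ∧
      (IsLocalMinOn f S a →
        (∃ i : Fin 3, (∀ j, l j * a j = l i * a j) ∧ l i = l 2) ∧
        (l 1 < l 2 → ∀ j : Fin 3, j ≠ 2 → a j = 0)) :=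
  stmt17_general l hl h01 h12 m₀ f hf S hS
end
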